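/- The ideal ED↑ contains an isomorphic copy of WR: there is a bijection π: ω×ω → ω×ω such that π[A] ∈ ED↑ for every A ∈ WR. -/

import Mathlib

open Set

/-- `I` is an ideal on `α`: closed under subsets and finite unions,
contains all finite sets, and is not all of `P(α)`. -/
def IsIdealOn {α : Type*} (I : Set (Set α)) : Prop :=
  (∀ A ∈ I, ∀ B : Set α, B ⊆ A → B ∈ I) ∧
  (∀ A ∈ I, ∀ B ∈ I, A ∪ B ∈ I) ∧
  (∀ A : Set α, A.Finite → A ∈ I) ∧
  (Set.univ : Set α) ∉ I

/-- Generator of the first type of `WR`: a vertical line. -/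
def WRgen1 (S : Set (ℕ × ℕ)) : Prop := ∃ i, S = {p : ℕ × ℕ | p.1 = i}

/-- Generator of the second type of `WR`. -/
def WRgen2 (S : Set (ℕ × ℕ)) : Prop :=
  ∀ p ∈ S, ∀ q ∈ S, p ≠ q → p.1 > q.1 + q.2 ∨ q.1 > p.1 + p.2

/-- The ideal `WR`: sets covered by finitely many generators. -/
def WR : Set (Set (ℕ × ℕ)) :=
  {A | ∃ C : Finset (Set (ℕ × ℕ)), (∀ S ∈ C, WRgen1 S ∨ WRgen2 S) ∧ A ⊆ ⋃₀ ↑C}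

/-- Generator of `ED↑`: a vertical line or the graph of a nondecreasing function. -/
def EDgen (S : Set (ℕ × ℕ)) : Prop :=
  (∃ i, S = {p : ℕ × ℕ | p.1 = i}) ∨
  (∃ f : ℕ → ℕ, Monotone f ∧ S = {p : ℕ × ℕ | p.2 = f p.1})

/-- The ideal `ED↑`. -/
def EDup : Set (Set (ℕ × ℕ)) :=
  {A | ∃ C : Finset (Set (ℕ × ℕ)), (∀ S ∈ C, EDgen S) ∧ A ⊆ ⋃₀ ↑C}

/-- A tree of finite sequences: closed under taking prefixes. -/
def IsTree {α : Type*} (T : Set (List α)) : Prop :=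
  ∀ s ∈ T, ∀ t : List α, t <+: s → t ∈ T

/-- `I` is weakly Ramsey: every (nonempty) tree all of whose ramifications
belong to the dual filter `I*` has a branch with `I`-positive range. -/
def WeaklyRamsey {α : Type*} (I : Set (Set α)) : Prop :=
  ∀ T : Set (List α), ([] : List α) ∈ T → IsTree T →
    (∀ s ∈ T, {x : α | s ++ [x] ∈ T}ᶜ ∈ I) →
    ∃ b : ℕ → α, (∀ k, (List.range k).map b ∈ T) ∧ Set.range b ∉ I

/-- `(X n)` is a partition of `α`. -/
def IsPartition {α : Type*} (X : ℕ → Set α) : Prop :=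
  (∀ m n, m ≠ n → Disjoint (X m) (X n)) ∧ (⋃ n, X n) = Set.univ

/-- `S` is a selector: it meets each piece in at most one point. -/
def IsSelector {α : Type*} (X : ℕ → Set α) (S : Set α) : Prop :=
  ∀ n, (S ∩ X n).Subsingleton

/-- Locally selective: every partition into sets from `I` has an `I`-positive selector. -/
def LocallySelective {α : Type*} (I : Set (Set α)) : Prop :=
  ∀ X : ℕ → Set α, IsPartition X → (∀ n, X n ∈ I) →
    ∃ S : Set α, IsSelector X S ∧ S ∉ I

/-- Weakly selective. -/
def WeaklySelective {α : Type*} (I : Set (Set α)) : Prop :=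
  ∀ X : ℕ → Set α, IsPartition X → {n | X n ∉ I}.Subsingleton →
    (∀ n, (⋃ m, ⋃ _ : n ≤ m, X m) ∉ I) →
    ∃ S : Set α, IsSelector X S ∧ S ∉ I

/-!
Send column `i` onto the hook `{(i, y) | y ≥ i} ∪ {(x, i) | x > i}`, alternating between its
vertical and horizontal arm. Both coordinates of the image of `(i, j)` then lie in `[i, i + j]`.
Two distinct points of a generator of the second kind have disjoint such intervals, so the image
of the generator is strictly increasing in both coordinates and hence lies on the graph of a
nondecreasing function; the image of a vertical line lies in column `i` together with row `i`.
-/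

def hook : (ℕ × ℕ) ≃ (ℕ × ℕ) where
  toFun p := if p.2 % 2 = 0 then (p.1, p.1 + p.2 / 2) else (p.1 + p.2 / 2 + 1, p.1)
  invFun q := if q.1 ≤ q.2 then (q.1, 2 * (q.2 - q.1)) else (q.2, 2 * (q.1 - q.2) - 1)
  left_inv := by
    rintro ⟨i, j⟩
    dsimp only
    split_ifs <;> ext <;> dsimp only at * <;> omega
  right_inv := by
    rintro ⟨x, y⟩
    dsimp only
    split_ifs <;> ext <;> dsimp only at * <;> omega

lemma hook_mem_Icc (p : ℕ × ℕ) :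
    (hook p).1 ∈ Icc p.1 (p.1 + p.2) ∧ (hook p).2 ∈ Icc p.1 (p.1 + p.2) := by
  simp only [hook, Equiv.coe_fn_mk, mem_Icc]
  split_ifs <;> dsimp only <;> omega

lemma hook_fst_eq_or_snd_eq (p : ℕ × ℕ) : (hook p).1 = p.1 ∨ (hook p).2 = p.1 := by
  simp only [hook, Equiv.coe_fn_mk]
  split_ifs <;> simp

lemma EDgen.mem_EDup {S : Set (ℕ × ℕ)} (hS : EDgen S) : S ∈ EDup :=
  ⟨{S}, by simpa using hS, by simp⟩

lemma EDup_mono {A B : Set (ℕ × ℕ)} (hB : B ∈ EDup) (hAB : A ⊆ B) : A ∈ EDup := by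
  obtain ⟨C, hC, hBC⟩ := hB
  exact ⟨C, hC, hAB.trans hBC⟩

lemma EDup_union {A B : Set (ℕ × ℕ)} (hA : A ∈ EDup) (hB : B ∈ EDup) : A ∪ B ∈ EDup := by
  obtain ⟨C, hC, hAC⟩ := hA
  obtain ⟨D, hD, hBD⟩ := hB
  refine ⟨C ∪ D, fun S hS => (Finset.mem_union.1 hS).elim (hC S) (hD S), ?_⟩
  rw [Finset.coe_union, sUnion_union]
  exact union_subset_union hAC hBD

lemma EDup_biUnion {ι : Type*} (s : Finset ι) {A : ι → Set (ℕ × ℕ)} (hA : ∀ i ∈ s, A i ∈ EDup) :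
    ⋃ i ∈ s, A i ∈ EDup := by
  classical
  induction s using Finset.induction_on with
  | empty => simpa using EDup_mono (EDgen.mem_EDup (Or.inl ⟨0, rfl⟩)) (empty_subset _)
  | insert i s _ ih =>
    rw [Finset.set_biUnion_insert]
    exact EDup_union (hA i (s.mem_insert_self i))
      (ih fun j hj => hA j (Finset.mem_insert_of_mem hj))

lemma exists_monotone_graph_superset {B : Set (ℕ × ℕ)}
    (hB : ∀ p ∈ B, ∀ q ∈ B, p.1 ≤ q.1 → p.2 ≤ q.2) :
    ∃ f : ℕ → ℕ, Monotone f ∧ B ⊆ {p | p.2 = f p.1} := by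
  set below : ℕ → Set ℕ := fun n => {y | ∃ x ≤ n, (x, y) ∈ B}
  have column_subsingleton (x : ℕ) : {y | (x, y) ∈ B}.Subsingleton := fun y hy y' hy' =>
    le_antisymm (hB _ hy _ hy' le_rfl) (hB _ hy' _ hy le_rfl)
  have below_bdd (n : ℕ) : BddAbove (below n) := by
    refine (((finite_Iic n).biUnion fun x _ => (column_subsingleton x).finite).subset ?_).bddAbove
    rintro y ⟨x, hx, hxy⟩
    exact mem_biUnion (mem_Iic.2 hx) hxy
  refine ⟨fun n => sSup (below n), fun m n hmn => ?_, ?_⟩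
  · exact csSup_le_csSup' (below_bdd n) fun y ⟨x, hx, hxy⟩ => ⟨x, hx.trans hmn, hxy⟩
  · rintro ⟨x, y⟩ hxy
    refine le_antisymm (le_csSup (below_bdd x) ⟨x, le_rfl, hxy⟩) (csSup_le' ?_)
    rintro y' ⟨x', hx', hxy'⟩
    exact hB _ hxy' _ hxy hx'

lemma WRgen2.hook_image_snd_le {S : Set (ℕ × ℕ)} (hS : WRgen2 S) :
    ∀ p ∈ hook '' S, ∀ q ∈ hook '' S, p.1 ≤ q.1 → p.2 ≤ q.2 := by
  rintro _ ⟨p, hp, rfl⟩ _ ⟨q, hq, rfl⟩ hle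
  obtain rfl | hne := eq_or_ne p q
  · rfl
  have hp' := hook_mem_Icc p
  have hq' := hook_mem_Icc q
  simp only [mem_Icc] at hp' hq'
  rcases hS p hp q hq hne with h | h <;> omega

lemma WRgen2.hook_image_mem_EDup {S : Set (ℕ × ℕ)} (hS : WRgen2 S) : hook '' S ∈ EDup := by
  obtain ⟨f, hf, hsub⟩ := exists_monotone_graph_superset hS.hook_image_snd_le
  exact EDup_mono (EDgen.mem_EDup (Or.inr ⟨f, hf, rfl⟩)) hsub

lemma hook_image_vertical_mem_EDup (i : ℕ) : hook '' {p | p.1 = i} ∈ EDup := by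
  refine EDup_mono (EDup_union (EDgen.mem_EDup (Or.inl ⟨i, rfl⟩))
    (EDgen.mem_EDup (Or.inr ⟨fun _ => i, monotone_const, rfl⟩))) ?_
  rintro _ ⟨p, rfl, rfl⟩
  exact hook_fst_eq_or_snd_eq p

theorem WR_sub_EDup :
    ∃ π : (ℕ × ℕ) ≃ (ℕ × ℕ), ∀ A ∈ WR, ⇑π '' A ∈ EDup := by
  refine ⟨hook, ?_⟩
  rintro A ⟨C, hC, hAC⟩
  refine EDup_mono ?_ (image_mono hAC)
  rw [sUnion_eq_biUnion, image_iUnion₂]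
  refine EDup_biUnion C fun S hS => ?_
  rcases hC S hS with ⟨i, rfl⟩ | hS
  · exact hook_image_vertical_mem_EDup i
  · exact hS.hook_image_mem_EDup
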